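/- For every positive integer n, the sum over all binary trees T with n vertices of n! · Π_{v ∈ T} (1/h_v) equals n!; equivalently, the sum over all binary trees with n vertices of the product of the reciprocals of the hook lengths equals 1. -/

import Mathlib

/-!
Let `S n` be the sum over binary trees with `n` vertices of `∏ 1 / h_v`. A tree with `n + 1`
vertices is a root, of hook length `n + 1`, over a left and a right subtree with `i` and `j`
vertices, `i + j = n`; hence `S (n + 1) = (n + 1)⁻¹ * ∑_{i + j = n} S i * S j`. The constant
sequence `1` satisfies this recursion because `n` has exactly `n + 1` such splits.
-/

/-- The product over all vertices `v` of a binary tree of `f h_v`, where `h_v` is the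
hook length of `v`, i.e. the number of vertices of the subtree rooted at `v`. -/
def hookProd (f : ℕ → ℚ) : Tree Unit → ℚ
  | BinaryTree.nil => 1
  | BinaryTree.node _ l r =>
      f (l.numNodes + r.numNodes + 1) * hookProd f l * hookProd f r

open Finset

namespace BinaryTree

theorem pairwiseDisjoint_pairwiseNode_antidiagonal (n : ℕ) :
    (antidiagonal n : Set (ℕ × ℕ)).PairwiseDisjoint fun ij =>
      pairwiseNode (treesOfNumNodesEq ij.1) (treesOfNumNodesEq ij.2) := by
  simp_rw [Set.PairwiseDisjoint, Set.Pairwise, disjoint_left]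
  aesop

theorem sum_treesOfNumNodesEq_succ {M : Type*} [AddCommMonoid M] (g : BinaryTree Unit → M)
    (n : ℕ) :
    ∑ T ∈ treesOfNumNodesEq (n + 1), g T =
      ∑ ij ∈ antidiagonal n, ∑ l ∈ treesOfNumNodesEq ij.1, ∑ r ∈ treesOfNumNodesEq ij.2,
        g (node () l r) := by
  rw [treesOfNumNodesEq_succ, sum_biUnion (pairwiseDisjoint_pairwiseNode_antidiagonal n)]
  simp only [sum_map, sum_product]
  rfl

end BinaryTree

open BinaryTree

theorem sum_hookProd_treesOfNumNodesEq_succ (f : ℕ → ℚ) (n : ℕ) :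
    ∑ T ∈ treesOfNumNodesEq (n + 1), hookProd f T =
      f (n + 1) * ∑ ij ∈ antidiagonal n,
        (∑ l ∈ treesOfNumNodesEq ij.1, hookProd f l) *
          ∑ r ∈ treesOfNumNodesEq ij.2, hookProd f r := by
  rw [sum_treesOfNumNodesEq_succ, mul_sum]
  refine sum_congr rfl fun ij hij => ?_
  rw [sum_mul_sum, mul_sum]
  refine sum_congr rfl fun l hl => ?_
  rw [mul_sum]
  refine sum_congr rfl fun r hr => ?_
  rw [mem_treesOfNumNodesEq] at hl hr
  rw [HasAntidiagonal.mem_antidiagonal] at hij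
  rw [hookProd, hl, hr, hij, mul_assoc]

theorem sum_hookProd_inv_treesOfNumNodesEq (n : ℕ) :
    ∑ T ∈ treesOfNumNodesEq n, hookProd (fun h => 1 / (h : ℚ)) T = 1 := by
  induction n using Nat.case_strong_induction_on with
  | hz => simp [hookProd]
  | hi n ih =>
    rw [sum_hookProd_treesOfNumNodesEq_succ]
    have hsplit : ∀ ij ∈ antidiagonal n,
        (∑ l ∈ treesOfNumNodesEq ij.1, hookProd (fun h => 1 / (h : ℚ)) l) *
          ∑ r ∈ treesOfNumNodesEq ij.2, hookProd (fun h => 1 / (h : ℚ)) r = 1 := by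
      intro ij hij
      rw [ih _ (HasAntidiagonal.antidiagonal.fst_le hij),
        ih _ (HasAntidiagonal.antidiagonal.snd_le hij), mul_one]
    rw [sum_congr rfl hsplit, sum_const, Nat.card_antidiagonal, nsmul_eq_mul, mul_one,
      one_div_mul_cancel (Nat.cast_ne_zero.mpr n.succ_ne_zero)]

theorem hook_length_formula_general (n : ℕ) :
    ∑ T ∈ Tree.treesOfNumNodesEq n,
      (n.factorial : ℚ) * hookProd (fun h => 1 / (h : ℚ)) T = (n.factorial : ℚ) := by
  rw [← mul_sum, sum_hookProd_inv_treesOfNumNodesEq, mul_one]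

theorem hook_length_formula (n : ℕ) (hn : 0 < n) :
    ∑ T ∈ Tree.treesOfNumNodesEq n,
      (n.factorial : ℚ) * hookProd (fun h => 1 / (h : ℚ)) T = (n.factorial : ℚ) :=
  hook_length_formula_general n
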